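/- Let C be a finite simple connected graph on vertex set V_C with edge set E_C, let k ≥ 1 be an integer, let T be a spanning tree of C rooted at r with U the set of vertices of depth at most k−1 in T, let S ⊆ E_C with a distinguished edge e ∈ S, and let H ⊆ E_C with all tree edges of T in H and e ∈ H. Assume: (a) every edge of S∖{e} with at least one endpoint in U belongs to H; (b) every edge of S∖{e} with both endpoints in U joins two vertices comparable in T; (c) for every subtree τ of T rooted at a vertex of depth k, every edge of S∖{e} with exactly one endpoint in τ joins two vertices comparable in T. Let T' be any spanning tree of the graph (V_C, H) rooted at r such that every edge of H joins two vertices comparable in T' and the depth of every vertex in T' is at least its depth in T (monotonic fall), and let U' be the set of vertices of depth at most k−1 in T'. Then: (1) every edge of S with both endpoints in U' joins two vertices comparable in T'; (2) for every subtree τ' of T' rooted at a vertex of depth k, every edge of S with exactly one endpoint in τ' joins two vertices comparable in T'; and (3) every edge of S with at least one endpoint in U' belongs to the set H' consisting of the tree edges of T' together with the edges of H having at least one endpoint in U'. -/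

import Mathlib

/-!
Monotonic fall shrinks the top levels, so an edge of `S` touching `U'` already touched `U`;
by (a) it lies in `H` (or is `e`), and the DFS property of `T'` makes its ends comparable.
An edge `uv` of `S` outside `H` has both ends at depth at least `k` in `T`, and (c) puts them
below a common depth-`k` vertex `w` of `T`. The `T`-walk from `u` to `v` through `w` stays
below `w`, hence by monotonic fall at depth at least `k` in `T'`; its edges lie in `H`, so
consecutive vertices are comparable in `T'`, and comparability between vertices of depth at
least `k` preserves the depth-`k` ancestor. So `u` and `v` lie in the same depth-`k` subtree
of `T'`, which is (2).
-/

namespace StreamDFS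

/-- `u` is an ancestor of `v` in the tree `T` rooted at `r`:
`u` lies on (every) path in `T` from `r` to `v`. -/
def IsAncestor {V : Type*} (T : SimpleGraph V) (r u v : V) : Prop :=
  ∀ p : T.Walk r v, p.IsPath → u ∈ p.support

/-- `u` and `v` are comparable in the tree `T` rooted at `r`:
one is an ancestor of the other. -/
def Cmp {V : Type*} (T : SimpleGraph V) (r u v : V) : Prop :=
  IsAncestor T r u v ∨ IsAncestor T r v u

/-- The depth (level) of `v` in the tree `T` rooted at `r`. -/
noncomputable def depth {V : Type*} (T : SimpleGraph V) (r v : V) : ℕ := T.dist r v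

/-- The top `k` levels of the tree `T` rooted at `r`: vertices of depth at most `k-1`. -/
noncomputable def topLevels {V : Type*} (T : SimpleGraph V) (r : V) (k : ℕ) : Set V :=
  {v | depth T r v ≤ k - 1}

open SimpleGraph Walk

section Tree

variable {V : Type*} {T : SimpleGraph V} {r u v w : V}

theorem length_eq_dist_of_isPath (hT : T.IsTree) {p : T.Walk u v} (hp : p.IsPath) :
    p.length = T.dist u v := by
  obtain ⟨q, hq, hql⟩ := hT.connected.exists_path_of_dist u v
  rw [(hT.existsUnique_path u v).unique hp hq, hql]

theorem isAncestor_getVert_getVert (hT : T.IsTree) {p : T.Walk r v} (hp : p.IsPath) {m n : ℕ}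
    (hmn : m ≤ n) : IsAncestor T r (p.getVert m) (p.getVert n) := by
  intro q hq
  rw [(hT.existsUnique_path _ _).unique hq (hp.take n)]
  simpa [min_eq_right hmn] using (p.take n).getVert_mem_support m

theorem depth_getVert (hT : T.IsTree) {p : T.Walk r v} (hp : p.IsPath) {n : ℕ}
    (hn : n ≤ p.length) : depth T r (p.getVert n) = n := by
  rw [depth, ← length_eq_dist_of_isPath hT (hp.take n), take_length, min_eq_left hn]

theorem IsAncestor.refl (T : SimpleGraph V) (r v : V) : IsAncestor T r v v :=
  fun p _ => p.end_mem_support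

theorem IsAncestor.getVert_depth (h : IsAncestor T r u v) (hT : T.IsTree) {p : T.Walk r v}
    (hp : p.IsPath) : p.getVert (depth T r u) = u ∧ depth T r u ≤ p.length := by
  obtain ⟨n, rfl, hn⟩ := mem_support_iff_exists_getVert.1 (h p hp)
  rw [depth_getVert hT hp hn]
  exact ⟨rfl, hn⟩

theorem IsAncestor.depth_le (h : IsAncestor T r u v) (hT : T.IsTree) :
    depth T r u ≤ depth T r v := by
  obtain ⟨p, hp, -⟩ := hT.existsUnique_path r v
  exact (h.getVert_depth hT hp).2.trans_eq (length_eq_dist_of_isPath hT hp)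

theorem IsAncestor.eq_of_depth_le (h : IsAncestor T r u v) (hT : T.IsTree)
    (hd : depth T r v ≤ depth T r u) : u = v := by
  obtain ⟨p, hp, -⟩ := hT.existsUnique_path r v
  obtain ⟨hu, hup⟩ := h.getVert_depth hT hp
  have hlen : depth T r u = p.length := by
    have := length_eq_dist_of_isPath hT hp
    unfold depth at hd hup ⊢
    omega
  rw [← hu, hlen, getVert_length]

theorem IsAncestor.trans (huw : IsAncestor T r u w) (hwv : IsAncestor T r w v) :
    IsAncestor T r u v := by
  intro p hp
  obtain ⟨n, rfl, -⟩ := mem_support_iff_exists_getVert.1 (hwv p hp)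
  exact (p.isSubwalk_take n).support_subset (huw _ (hp.take n))

theorem IsAncestor.cmp (hu : IsAncestor T r u v) (hw : IsAncestor T r w v) (hT : T.IsTree) :
    Cmp T r u w := by
  obtain ⟨p, hp, -⟩ := hT.existsUnique_path r v
  obtain ⟨hu', -⟩ := hu.getVert_depth hT hp
  obtain ⟨hw', -⟩ := hw.getVert_depth hT hp
  rcases le_total (depth T r u) (depth T r w) with h | h
  · left
    simpa only [hu', hw'] using isAncestor_getVert_getVert hT hp h
  · right
    simpa only [hu', hw'] using isAncestor_getVert_getVert hT hp h

theorem exists_isAncestor_depth_eq (hT : T.IsTree) {d : ℕ} (hd : d ≤ depth T r v) :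
    ∃ w, IsAncestor T r w v ∧ depth T r w = d := by
  obtain ⟨p, hp, -⟩ := hT.existsUnique_path r v
  have hlen : d ≤ p.length := hd.trans_eq (length_eq_dist_of_isPath hT hp).symm
  refine ⟨p.getVert d, ?_, depth_getVert hT hp hlen⟩
  simpa only [getVert_length] using isAncestor_getVert_getVert hT hp hlen

theorem IsAncestor.of_cmp {y a b : V} (hy : IsAncestor T r y a) (hab : Cmp T r a b)
    (hd : depth T r y ≤ depth T r b) (hT : T.IsTree) : IsAncestor T r y b := by
  rcases hab with hab | hba
  · exact hy.trans hab
  · rcases hy.cmp hba hT with hyb | hby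
    · exact hyb
    · rw [hby.eq_of_depth_le hT hd]
      exact IsAncestor.refl T r y

theorem exists_walk_of_isAncestor (hT : T.IsTree) (h : IsAncestor T r w v) :
    ∃ q : T.Walk w v, ∀ z ∈ q.support, IsAncestor T r w z := by
  obtain ⟨p, hp, -⟩ := hT.existsUnique_path r v
  obtain ⟨n, rfl, -⟩ := mem_support_iff_exists_getVert.1 (h p hp)
  refine ⟨p.drop n, fun z hz => ?_⟩
  obtain ⟨m, rfl, -⟩ := mem_support_iff_exists_getVert.1 hz
  rw [drop_getVert]
  exact isAncestor_getVert_getVert hT hp (Nat.le_add_right n m)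

theorem exists_walk_of_isAncestor_of_isAncestor (hT : T.IsTree) (hu : IsAncestor T r w u)
    (hv : IsAncestor T r w v) : ∃ q : T.Walk u v, ∀ z ∈ q.support, IsAncestor T r w z := by
  obtain ⟨qu, hqu⟩ := exists_walk_of_isAncestor hT hu
  obtain ⟨qv, hqv⟩ := exists_walk_of_isAncestor hT hv
  refine ⟨qu.reverse.append qv, fun z hz => ?_⟩
  rw [mem_support_append_iff, support_reverse, List.mem_reverse] at hz
  exact hz.elim (hqu z) (hqv z)

theorem isAncestor_of_walk {G : SimpleGraph V} (hT : T.IsTree)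
    (hG : ∀ a b, G.Adj a b → Cmp T r a b) {y a b : V} (hy : IsAncestor T r y a)
    (q : G.Walk a b) (hq : ∀ z ∈ q.support, depth T r y ≤ depth T r z) :
    IsAncestor T r y b := by
  induction q with
  | nil => exact hy
  | cons hadj q ih =>
    refine ih (hy.of_cmp (hG _ _ hadj) (hq _ (by simp)) hT) fun z hz => hq z ?_
    simp [hz]

end Tree

theorem restructuring_preserves_invariants_general {V : Type*}
    (k : ℕ) (r : V)
    (T : SimpleGraph V) (hTree : T.IsTree)
    (S : Set (Sym2 V))
    (e : Sym2 V)
    (H : Set (Sym2 V)) (hTH : T.edgeSet ⊆ H) (heH : e ∈ H)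
    -- (a) invariant I_H before processing e :
    (ha : ∀ u v, s(u, v) ∈ S → s(u, v) ≠ e →
      (u ∈ topLevels T r k ∨ v ∈ topLevels T r k) → s(u, v) ∈ H)
    -- (c) invariant I_{T2} before processing e :
    (hc : ∀ x, depth T r x = k → ∀ u v, s(u, v) ∈ S → s(u, v) ≠ e →
      IsAncestor T r x u → ¬ IsAncestor T r x v → Cmp T r u v)
    -- T' : the restructured tree, a DFS tree of (V, H) rooted at r, with monotonic fall :
    (T' : SimpleGraph V) (hTree' : T'.IsTree)
    (hDFS : ∀ u v, s(u, v) ∈ H → Cmp T' r u v)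
    (hmono : ∀ v, depth T r v ≤ depth T' r v) :
    -- (1) invariant I_{T1} for T' with respect to all of S :
    (∀ u v, s(u, v) ∈ S →
      u ∈ topLevels T' r k → v ∈ topLevels T' r k → Cmp T' r u v)
    -- (2) invariant I_{T2} for T' with respect to all of S :
    ∧ (∀ x, depth T' r x = k → ∀ u v, s(u, v) ∈ S →
      IsAncestor T' r x u → ¬ IsAncestor T' r x v → Cmp T' r u v)
    -- (3) invariant I_H for the updated stored subgraph H' :
    ∧ (∀ u v, s(u, v) ∈ S →
      (u ∈ topLevels T' r k ∨ v ∈ topLevels T' r k) →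
      s(u, v) ∈ T'.edgeSet ∪
        {f ∈ H | ∃ w ∈ topLevels T' r k, w ∈ f}) := by
  have hU : ∀ z, z ∈ topLevels T' r k → z ∈ topLevels T r k := fun z hz => (hmono z).trans hz
  have hSH : ∀ u v, s(u, v) ∈ S → (u ∈ topLevels T' r k ∨ v ∈ topLevels T' r k) →
      s(u, v) ∈ H := by
    intro u v huv hor
    by_cases he : s(u, v) = e
    · exact he ▸ heH
    · exact ha u v huv he (hor.imp (hU u) (hU v))
  refine ⟨fun u v huv hu _ => hDFS u v (hSH u v huv (.inl hu)), ?_,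
    fun u v huv hor => .inr ⟨hSH u v huv hor, ?_⟩⟩
  · intro x hx u v huv hxu hxv
    by_cases hH : s(u, v) ∈ H
    · exact hDFS u v hH
    have he : s(u, v) ≠ e := fun h => hH (h ▸ heH)
    have hku : k ≤ depth T r u := by
      by_contra h
      exact hH (ha u v huv he (.inl (show _ ≤ k - 1 by omega)))
    have hkv : k ≤ depth T r v := by
      by_contra h
      exact hH (ha u v huv he (.inr (show _ ≤ k - 1 by omega)))
    obtain ⟨w, hwu, hw⟩ := exists_isAncestor_depth_eq hTree hku
    have hwv : IsAncestor T r w v := by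
      by_contra h
      exact h (hwu.of_cmp (hc w hw u v huv he hwu h) (hw ▸ hkv) hTree)
    obtain ⟨q, hq⟩ := exists_walk_of_isAncestor_of_isAncestor hTree hwu hwv
    refine absurd (isAncestor_of_walk hTree' (fun a b hab => hDFS a b (hTH hab)) hxu q
      fun z hz => ?_) hxv
    calc depth T' r x = depth T r w := hx.trans hw.symm
      _ ≤ depth T r z := (hq z hz).depth_le hTree
      _ ≤ depth T' r z := hmono z
  · rcases hor with h | h
    exacts [⟨u, h, Sym2.mem_mk_left u v⟩, ⟨v, h, Sym2.mem_mk_right u v⟩]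

/-- **Lemma 5.3.**  On insertion of an edge `e`, any restructuring procedure which
updates the tree `T` to a valid DFS tree `T'` of the stored subgraph `H` (which contains
`e`) ensuring monotonic fall, preserves the invariants `I_T` (`I_{T1}` and `I_{T2}`)
and `I_H` with respect to the set `S` of edges of the component seen so far. -/
theorem restructuring_preserves_invariants {V : Type*} [Fintype V]
    (G : SimpleGraph V) (hG : G.Connected)
    (k : ℕ) (hk : 1 ≤ k) (r : V)
    (T : SimpleGraph V) (hTG : T ≤ G) (hTree : T.IsTree)
    (S : Set (Sym2 V)) (hS : S ⊆ G.edgeSet)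
    (e : Sym2 V) (heS : e ∈ S)
    (H : Set (Sym2 V)) (hHG : H ⊆ G.edgeSet) (hTH : T.edgeSet ⊆ H) (heH : e ∈ H)
    -- (a) invariant I_H before processing e :
    (ha : ∀ u v, s(u, v) ∈ S → s(u, v) ≠ e →
      (u ∈ topLevels T r k ∨ v ∈ topLevels T r k) → s(u, v) ∈ H)
    -- (b) invariant I_{T1} before processing e :
    (hb : ∀ u v, s(u, v) ∈ S → s(u, v) ≠ e →
      u ∈ topLevels T r k → v ∈ topLevels T r k → Cmp T r u v)
    -- (c) invariant I_{T2} before processing e :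
    (hc : ∀ x, depth T r x = k → ∀ u v, s(u, v) ∈ S → s(u, v) ≠ e →
      IsAncestor T r x u → ¬ IsAncestor T r x v → Cmp T r u v)
    -- T' : the restructured tree, a DFS tree of (V, H) rooted at r, with monotonic fall :
    (T' : SimpleGraph V) (hT'H : T'.edgeSet ⊆ H) (hTree' : T'.IsTree)
    (hDFS : ∀ u v, s(u, v) ∈ H → Cmp T' r u v)
    (hmono : ∀ v, depth T r v ≤ depth T' r v) :
    -- (1) invariant I_{T1} for T' with respect to all of S :
    (∀ u v, s(u, v) ∈ S →
      u ∈ topLevels T' r k → v ∈ topLevels T' r k → Cmp T' r u v)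
    -- (2) invariant I_{T2} for T' with respect to all of S :
    ∧ (∀ x, depth T' r x = k → ∀ u v, s(u, v) ∈ S →
      IsAncestor T' r x u → ¬ IsAncestor T' r x v → Cmp T' r u v)
    -- (3) invariant I_H for the updated stored subgraph H' :
    ∧ (∀ u v, s(u, v) ∈ S →
      (u ∈ topLevels T' r k ∨ v ∈ topLevels T' r k) →
      s(u, v) ∈ T'.edgeSet ∪
        {f ∈ H | ∃ w ∈ topLevels T' r k, w ∈ f}) :=
  restructuring_preserves_invariants_general k r T hTree S e H hTH heH ha hc T' hTree' hDFS hmono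

end StreamDFS
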